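/- arXiv:2408.13323 — 2 statements merged into one kernel-verified Lean document; each statement's English description precedes it below -/
import Mathlib

section
/- Under the Basic Assumption, suppose σ^ν, θ^ν → ∞, ε^ν → 0, θ^ν·|τ^ν − τ| → 0, there exists an optimal solution (x*, y*) of (P) such that the value function V is calm at x*, and for each ν, (x^ν, y^ν, u^ν, α^ν, λ^ν) is an ε^ν-optimal solution of (P)^ν. Suppose along a subsequence N ⊂ ℕ one has (x^ν, y^ν, u^ν, α^ν) → (x̂, ŷ, û, α̂) and V is locally calm at x̂. If θ^ν λ̄^ν · sup_{y∈Y} dist₂(y, Y^ν) → 0 and there are constants κ_g, κ_H ∈ [0,∞) with |g(x,y) − g(x,y')| ≤ κ_g ‖y − y'‖₂ and ‖H(x,y) − H(x,y')‖ ≤ κ_H ‖y − y'‖₂ for all x ∈ X and y, y' ∈ Y, then (x̂, ŷ) is an optimal solution of (P) and 𝔪^ν → 𝔪 along N, with 𝔪 a real number. -/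
/-!
Calmness of `V` at the optimal `(x*, y*)` makes it an exact-penalty point of the lower-level
problem: `g(x*, y*) ≤ g(x*, z) + λ dist(H(x*, z), D) + τ` on `Y`. Choosing `u` so that
`H^ν(x*, y*) + u` is a nearest point of `D`, and `-α` of the size of the data errors, gives
feasible points of (P)^ν of value `f^ν(x*, y*) + o(1)`, so `limsup 𝔪^ν ≤ 𝔪`. Hence the penalties
`σ^ν ‖u^ν‖ - θ^ν α^ν` stay bounded along `N`, and `σ^ν, θ^ν → ∞` force `u^ν, α^ν → 0`, which
puts `H(x̂, ŷ)` in `D`. Local calmness at `x̂` replaces the lower-level constraint of (P)^ν by its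
penalized form near `x̂`; testing it at points of `Y^ν` within `dist₂(·, Y^ν)` of lower-level
feasible points costs only a Lipschitz error, and in the limit `ŷ` is `τ`-optimal. So `(x̂, ŷ)` is
feasible for (P) and `𝔪 ≤ f(x̂, ŷ) ≤ liminf 𝔪^ν ≤ limsup 𝔪^ν ≤ 𝔪`.
-/

open Filter Topology Metric Set

attribute [local instance] Classical.propDecidable

noncomputable section

/-- `ℝ^n` with the Euclidean norm. -/
abbrev Rn (n : ℕ) : Type := EuclideanSpace ℝ (Fin n)

variable {n m : ℕ} {Q : Type*} [NormedAddCommGroup Q]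

/-- `(x, y)` is feasible in the bilevel problem (P): `x ∈ X` and
`y ∈ τ-argmin_{z ∈ Y} { g(x,z) | H(x,z) ∈ D }`. -/
def PFeas (X : Set (Rn n)) (Y : Set (Rn m)) (D : Set Q)
    (g : Rn n × Rn m → ℝ) (H : Rn n × Rn m → Q) (τ : ℝ)
    (x : Rn n) (y : Rn m) : Prop :=
  x ∈ X ∧ y ∈ Y ∧ H (x, y) ∈ D ∧
    ∀ z ∈ Y, H (x, z) ∈ D → g (x, y) ≤ g (x, z) + τ

/-- The minimum value `𝔪` of (P). -/
def PVal (X : Set (Rn n)) (Y : Set (Rn m)) (D : Set Q)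
    (f : Rn n × Rn m → EReal) (g : Rn n × Rn m → ℝ) (H : Rn n × Rn m → Q)
    (τ : ℝ) : EReal :=
  ⨅ (x : Rn n) (y : Rn m) (_ : PFeas X Y D g H τ x y), f (x, y)

/-- Optimal solution of (P): feasible, finite objective value attaining `𝔪`. -/
def POpt (X : Set (Rn n)) (Y : Set (Rn m)) (D : Set Q)
    (f : Rn n × Rn m → EReal) (g : Rn n × Rn m → ℝ) (H : Rn n × Rn m → Q)
    (τ : ℝ) (x : Rn n) (y : Rn m) : Prop :=
  PFeas X Y D g H τ x y ∧ f (x, y) ≠ ⊤ ∧ f (x, y) = PVal X Y D f g H τ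

/-- Feasibility in the alternative problem (P)^ν with data `Yn, gn, Hn, lamBar, τn`. -/
def PnuFeas (X : Set (Rn n)) (Y : Set (Rn m)) (D : Set Q) (Yn : Set (Rn m))
    (gn : Rn n × Rn m → ℝ) (Hn : Rn n × Rn m → Q) (lamBar τn : ℝ)
    (x : Rn n) (y : Rn m) (u : Q) (α lam : ℝ) : Prop :=
  x ∈ X ∧ y ∈ Y ∧ α ≤ 0 ∧ 0 ≤ lam ∧ lam ≤ lamBar ∧ Hn (x, y) + u ∈ D ∧
    ∀ z ∈ Yn, gn (x, y) + α ≤ gn (x, z) + lam * infDist (Hn (x, z)) D + τn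

/-- Objective function of (P)^ν: `f^ν(x,y) + σ^ν ‖u‖ - θ^ν α`. -/
def PnuObj (fn : Rn n × Rn m → EReal) (σn θn : ℝ)
    (x : Rn n) (y : Rn m) (u : Q) (α : ℝ) : EReal :=
  fn (x, y) + ((σn * ‖u‖ - θn * α : ℝ) : EReal)

/-- The minimum value `𝔪^ν` of (P)^ν. -/
def PnuVal (X : Set (Rn n)) (Y : Set (Rn m)) (D : Set Q) (Yn : Set (Rn m))
    (fn : Rn n × Rn m → EReal) (gn : Rn n × Rn m → ℝ) (Hn : Rn n × Rn m → Q)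
    (σn θn lamBar τn : ℝ) : EReal :=
  ⨅ (x : Rn n) (y : Rn m) (u : Q) (α : ℝ) (lam : ℝ)
    (_ : PnuFeas X Y D Yn gn Hn lamBar τn x y u α lam),
    PnuObj fn σn θn x y u α

/-- `ε`-optimal solution of (P)^ν: feasible with finite objective value at most `𝔪^ν + ε`. -/
def PnuEps (X : Set (Rn n)) (Y : Set (Rn m)) (D : Set Q) (Yn : Set (Rn m))
    (fn : Rn n × Rn m → EReal) (gn : Rn n × Rn m → ℝ) (Hn : Rn n × Rn m → Q)
    (σn θn lamBar τn ε : ℝ)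
    (x : Rn n) (y : Rn m) (u : Q) (α lam : ℝ) : Prop :=
  PnuFeas X Y D Yn gn Hn lamBar τn x y u α lam ∧
    PnuObj fn σn θn x y u α ≠ ⊤ ∧
    PnuObj fn σn θn x y u α ≤ PnuVal X Y D Yn fn gn Hn σn θn lamBar τn + (ε : EReal)

/-- The value function `V(x,u) = inf_{y ∈ Y} { g(x,y) | H(x,y) + u ∈ D }`. -/
def Vfun (Y : Set (Rn m)) (D : Set Q)
    (g : Rn n × Rn m → ℝ) (H : Rn n × Rn m → Q)
    (x : Rn n) (u : Q) : EReal :=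
  ⨅ (y : Rn m) (_ : y ∈ Y ∧ H (x, y) + u ∈ D), (g (x, y) : EReal)

/-- The value function `V` is calm at `x` with penalty threshold `lam`. -/
def CalmAtWith (Y : Set (Rn m)) (D : Set Q)
    (g : Rn n × Rn m → ℝ) (H : Rn n × Rn m → Q)
    (x : Rn n) (lam : ℝ) : Prop :=
  0 ≤ lam ∧ ∀ u : Q,
    Vfun Y D g H x 0 - ((lam * ‖u‖ : ℝ) : EReal) ≤ Vfun Y D g H x u

/-- The value function `V` is calm at `x`. -/
def CalmAt (Y : Set (Rn m)) (D : Set Q)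
    (g : Rn n × Rn m → ℝ) (H : Rn n × Rn m → Q) (x : Rn n) : Prop :=
  ∃ lam : ℝ, CalmAtWith Y D g H x lam

/-- The value function `V` is locally calm at `xbar`. -/
def LocallyCalmAt (Y : Set (Rn m)) (D : Set Q)
    (g : Rn n × Rn m → ℝ) (H : Rn n × Rn m → Q) (xbar : Rn n) : Prop :=
  ∃ lam ρ : ℝ, 0 ≤ lam ∧ 0 < ρ ∧
    ∀ x ∈ Metric.closedBall xbar ρ, ∀ u : Q,
      Vfun Y D g H x 0 - ((lam * ‖u‖ : ℝ) : EReal) ≤ Vfun Y D g H x u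

/-- The penalty-based value function `μ(x,λ) = inf_{y ∈ S} [g(x,y) + λ dist(H(x,y), D)]`. -/
def muSet (S : Set (Rn m)) (D : Set Q)
    (g : Rn n × Rn m → ℝ) (H : Rn n × Rn m → Q)
    (x : Rn n) (lam : ℝ) : EReal :=
  ⨅ (y : Rn m) (_ : y ∈ S), ((g (x, y) + lam * infDist (H (x, y)) D : ℝ) : EReal)

/-- The Basic Assumption (Assumption 2.1). -/
structure BasicAssumption (X : Set (Rn n)) (Y : Set (Rn m)) (D : Set Q)
    (Yν : ℕ → Set (Rn m))
    (f : Rn n × Rn m → EReal) (fν : ℕ → Rn n × Rn m → EReal)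
    (g : Rn n × Rn m → ℝ) (gν : ℕ → Rn n × Rn m → ℝ)
    (H : Rn n × Rn m → Q) (Hν : ℕ → Rn n × Rn m → Q)
    (σ θ lamBar τν δ η : ℕ → ℝ) : Prop where
  X_nonempty : X.Nonempty
  X_closed : IsClosed X
  Y_nonempty : Y.Nonempty
  Y_closed : IsClosed Y
  D_nonempty : D.Nonempty
  D_closed : IsClosed D
  Yν_nonempty : ∀ ν, (Yν ν).Nonempty
  Yν_subset : ∀ ν, Yν ν ⊆ Y
  Yν_conv : ∀ y : Rn m,
    Tendsto (fun ν => infDist y (Yν ν)) atTop (𝓝 (infDist y Y))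
  δ_lim : Tendsto δ atTop (𝓝 0)
  g_err : ∀ ν, ∀ x ∈ X, ∀ y ∈ Y, |gν ν (x, y) - g (x, y)| ≤ δ ν
  g_cont : ContinuousOn g (X ×ˢ Y)
  η_lim : Tendsto η atTop (𝓝 0)
  H_err : ∀ ν, ∀ x ∈ X, ∀ y ∈ Y,
    |infDist (Hν ν (x, y)) D - infDist (H (x, y)) D| ≤ η ν
  H_cont : ContinuousOn H (X ×ˢ Y)
  f_ne_bot : ∀ p, f p ≠ ⊥
  fν_ne_bot : ∀ ν p, fν ν p ≠ ⊥
  f_limsup : ∀ x ∈ X, ∀ y ∈ Y,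
    limsup (fun ν => fν ν (x, y)) atTop ≤ f (x, y)
  f_liminf : ∀ x ∈ X, ∀ y ∈ Y, ∀ (xs : ℕ → Rn n) (ys : ℕ → Rn m),
    (∀ ν, xs ν ∈ X) → (∀ ν, ys ν ∈ Y) →
    Tendsto xs atTop (𝓝 x) → Tendsto ys atTop (𝓝 y) →
    f (x, y) ≤ liminf (fun ν => fν ν (xs ν, ys ν)) atTop
  σ_nonneg : ∀ ν, 0 ≤ σ ν
  θ_nonneg : ∀ ν, 0 ≤ θ ν
  lamBar_nonneg : ∀ ν, 0 ≤ lamBar ν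
  τν_nonneg : ∀ ν, 0 ≤ τν ν
  lamBar_top : Tendsto lamBar atTop atTop
  ση_lim : Tendsto (fun ν => σ ν * η ν) atTop (𝓝 0)
  θlamη_lim : Tendsto (fun ν => θ ν * lamBar ν * η ν) atTop (𝓝 0)
  θδ_lim : Tendsto (fun ν => θ ν * δ ν) atTop (𝓝 0)

lemma exists_add_mem_norm_eq_infDist {E : Type*} [NormedAddCommGroup E] [ProperSpace E]
    {S : Set E} (hS : IsClosed S) (hne : S.Nonempty) (a : E) :
    ∃ u : E, a + u ∈ S ∧ ‖u‖ = infDist a S := by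
  obtain ⟨b, hb, hdist⟩ := hS.exists_infDist_eq_dist hne a
  refine ⟨b - a, by simpa using hb, ?_⟩
  rw [hdist, dist_eq_norm, norm_sub_rev]

lemma le_mul_infDist_add {E : Type*} [PseudoMetricSpace E] {S : Set E} (hS : S.Nonempty)
    {a : E} {c K e : ℝ} (hK : 0 ≤ K) (h : ∀ w ∈ S, c ≤ K * dist a w + e) :
    c ≤ K * infDist a S + e := by
  rcases hK.eq_or_lt with rfl | hK
  · obtain ⟨w, hw⟩ := hS
    simpa using h w hw
  · have : (c - e) / K ≤ infDist a S :=
      (le_infDist hS).2 fun w hw => by rw [div_le_iff₀ hK]; linarith [h w hw]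
    rw [div_le_iff₀ hK] at this
    linarith

lemma tendsto_zero_of_mul_le {ι : Type*} {l : Filter ι} {a c : ι → ℝ} {C : ℝ}
    (hc : Tendsto c l atTop) (ha : ∀ᶠ i in l, 0 ≤ a i) (hca : ∀ᶠ i in l, c i * a i ≤ C) :
    Tendsto a l (𝓝 0) := by
  refine squeeze_zero' ha ?_ ((tendsto_const_nhds (x := C)).div_atTop hc)
  filter_upwards [hca, hc.eventually_gt_atTop 0] with i hi hpos
  rw [le_div_iff₀ hpos]
  linarith

lemma tendsto_zero_of_tendsto_atTop_mul {ι : Type*} {l : Filter ι} {a c : ι → ℝ}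
    (hc : Tendsto c l atTop) (ha : ∀ᶠ i in l, 0 ≤ a i)
    (hca : Tendsto (fun i => c i * a i) l (𝓝 0)) : Tendsto a l (𝓝 0) :=
  tendsto_zero_of_mul_le hc ha ((hca.eventually_lt_const one_pos).mono fun _ => le_of_lt)

lemma tendsto_ite_mem_range {E : Type*} [TopologicalSpace E] {φ : ℕ → ℕ} (hφ : StrictMono φ)
    {v : ℕ → E} {a : E} (h : Tendsto (fun k => v (φ k)) atTop (𝓝 a)) :
    Tendsto (fun ν => if ν ∈ range φ then v ν else a) atTop (𝓝 a) := by
  refine tendsto_iff_forall_eventually_mem.2 fun U hU => ?_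
  obtain ⟨K, hK⟩ := eventually_atTop.1 (h.eventually_mem hU)
  refine eventually_atTop.2 ⟨φ K, fun ν hν => ?_⟩
  split_ifs with hmem
  · obtain ⟨k, rfl⟩ := hmem
    exact hK k (hφ.le_iff_le.1 hν)
  · exact mem_of_mem_nhds hU

lemma ContinuousOn.tendsto_comp_prodMk {α β γ ι : Type*} [TopologicalSpace α]
    [TopologicalSpace β] [TopologicalSpace γ] {F : α × β → γ} {s : Set α} {t : Set β}
    (hF : ContinuousOn F (s ×ˢ t)) {l : Filter ι} {x : ι → α} {y : ι → β} {a : α} {b : β}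
    (ha : a ∈ s) (hb : b ∈ t) (hx : ∀ i, x i ∈ s) (hy : ∀ i, y i ∈ t)
    (hxa : Tendsto x l (𝓝 a)) (hyb : Tendsto y l (𝓝 b)) :
    Tendsto (fun i => F (x i, y i)) l (𝓝 (F (a, b))) :=
  (hF (a, b) ⟨ha, hb⟩).tendsto.comp
    (tendsto_nhdsWithin_iff.2 ⟨hxa.prodMk_nhds hyb, .of_forall fun i => ⟨hx i, hy i⟩⟩)

namespace EReal

variable {ι : Type*} {l : Filter ι} {a b : ι → EReal} {e : ι → ℝ}

lemma exists_eventually_le_of_add_le {P : ι → ℝ} (he : Tendsto e l (𝓝 0))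
    (ha : limsup a l < ⊤) (hb : ⊥ < liminf b l) (h : ∀ i, b i + P i ≤ a i + e i) :
    ∃ C : ℝ, ∀ᶠ i in l, P i ≤ C := by
  obtain ⟨A, hA, -⟩ := EReal.lt_iff_exists_real_btwn.1 ha
  obtain ⟨B, -, hB⟩ := EReal.lt_iff_exists_real_btwn.1 hb
  refine ⟨A + 1 - B, ?_⟩
  filter_upwards [eventually_lt_of_limsup_lt hA, eventually_lt_of_lt_liminf hB,
    he.eventually_lt_const one_pos] with i hai hbi hei
  have : ((B + P i : ℝ) : EReal) ≤ ((A + 1 : ℝ) : EReal) := calc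
    ((B + P i : ℝ) : EReal) = (B : EReal) + P i := coe_add B (P i)
    _ ≤ b i + P i := add_le_add_left hbi.le _
    _ ≤ a i + e i := h i
    _ ≤ (A : EReal) + (1 : ℝ) := add_le_add hai.le (EReal.coe_le_coe_iff.2 hei.le)
    _ = ((A + 1 : ℝ) : EReal) := (coe_add A 1).symm
  linarith [EReal.coe_le_coe_iff.1 this]

lemma tendsto_of_le_add [l.NeBot] {L r : EReal} (he : Tendsto e l (𝓝 0))
    (hab : ∀ i, b i ≤ a i + e i) (hL : L ≤ liminf b l) (ha : limsup a l ≤ r) (hr : r ≤ L) :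
    Tendsto a l (𝓝 r) ∧ L = r := by
  have he' : Tendsto (fun i => (e i : EReal)) l (𝓝 0) :=
    (continuous_coe_real_ereal.tendsto 0).comp he
  have hLa : L ≤ liminf a l := calc
    L ≤ liminf b l := hL
    _ ≤ liminf ((fun i => (e i : EReal)) + a) l :=
      liminf_le_liminf (.of_forall fun i => (hab i).trans_eq (add_comm _ _))
    _ ≤ limsup (fun i => (e i : EReal)) l + liminf a l :=
      liminf_add_le (.inl (by simp [he'.limsup_eq])) (.inl (by simp [he'.limsup_eq]))
    _ = liminf a l := by rw [he'.limsup_eq, zero_add]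
  have hinf : liminf a l = r := le_antisymm (le_trans liminf_le_limsup ha) (hr.trans hLa)
  have hsup : limsup a l = r := le_antisymm ha (hinf ▸ liminf_le_limsup)
  exact ⟨tendsto_of_liminf_eq_limsup hinf hsup, le_antisymm (hLa.trans hinf.le) hr⟩

end EReal

section ValueFunction

variable {X : Set (Rn n)} {Y : Set (Rn m)} {D : Set Q}
  {g : Rn n × Rn m → ℝ} {H : Rn n × Rn m → Q}

lemma Vfun_le {x : Rn n} {y : Rn m} {u : Q} (hy : y ∈ Y) (hH : H (x, y) + u ∈ D) :
    Vfun Y D g H x u ≤ (g (x, y) : EReal) :=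
  iInf₂_le y ⟨hy, hH⟩

omit [NormedAddCommGroup Q] in
lemma PVal_le {f : Rn n × Rn m → EReal} {τ : ℝ} {x : Rn n} {y : Rn m}
    (h : PFeas X Y D g H τ x y) : PVal X Y D f g H τ ≤ f (x, y) :=
  iInf₂_le_of_le x y (iInf_le _ h)

lemma CalmAtWith.le_add_mul_infDist [ProperSpace Q] (hD : IsClosed D) (hDne : D.Nonempty)
    {x : Rn n} {lam : ℝ} (hcalm : CalmAtWith Y D g H x lam) {c e : ℝ}
    (h : ∀ z ∈ Y, H (x, z) ∈ D → c ≤ g (x, z) + e) {z : Rn m} (hz : z ∈ Y) :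
    c ≤ g (x, z) + lam * infDist (H (x, z)) D + e := by
  obtain ⟨u, huD, hu⟩ := exists_add_mem_norm_eq_infDist hD hDne (H (x, z))
  have hV : ((c - e : ℝ) : EReal) ≤ Vfun Y D g H x 0 :=
    le_iInf₂ fun w hw => EReal.coe_le_coe_iff.2 (by linarith [h w hw.1 (by simpa using hw.2)])
  have : ((c - e - lam * ‖u‖ : ℝ) : EReal) ≤ g (x, z) := calc
    ((c - e - lam * ‖u‖ : ℝ) : EReal) = ((c - e : ℝ) : EReal) - ((lam * ‖u‖ : ℝ) : EReal) :=
      EReal.coe_sub _ _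
    _ ≤ Vfun Y D g H x 0 - ((lam * ‖u‖ : ℝ) : EReal) := EReal.sub_le_sub hV le_rfl
    _ ≤ Vfun Y D g H x u := hcalm.2 u
    _ ≤ g (x, z) := Vfun_le hz huD
  rw [← hu]
  linarith [EReal.coe_le_coe_iff.1 this]

end ValueFunction

section ApproximateProblem

variable {X : Set (Rn n)} {Y : Set (Rn m)} {D : Set Q} {Yn : Set (Rn m)}
  {g gn : Rn n × Rn m → ℝ} {H Hn : Rn n × Rn m → Q} {fn : Rn n × Rn m → EReal}
  {σn θn lamBar τn δ η : ℝ} {x : Rn n} {y : Rn m} {u : Q} {α lam : ℝ}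

lemma PnuVal_le_PnuObj (h : PnuFeas X Y D Yn gn Hn lamBar τn x y u α lam) :
    PnuVal X Y D Yn fn gn Hn σn θn lamBar τn ≤ PnuObj fn σn θn x y u α :=
  iInf₂_le_of_le x y <| iInf₂_le_of_le u α <| iInf₂_le lam h

lemma le_PnuObj (hσ : 0 ≤ σn) (hθ : 0 ≤ θn) (hα : α ≤ 0) :
    fn (x, y) ≤ PnuObj fn σn θn x y u α := by
  refine le_add_of_nonneg_right (EReal.coe_nonneg.2 (sub_nonneg.2 ?_))
  exact (mul_nonpos_of_nonneg_of_nonpos hθ hα).trans (mul_nonneg hσ (norm_nonneg u))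

lemma PnuVal_le_of_penalty [ProperSpace Q] (hD : IsClosed D) (hDne : D.Nonempty) {τ : ℝ}
    (hx : x ∈ X) (hy : y ∈ Y) (hHxy : H (x, y) ∈ D)
    (hpen : ∀ z ∈ Y, g (x, y) ≤ g (x, z) + lam * infDist (H (x, z)) D + τ)
    (hlam0 : 0 ≤ lam) (hlam : lam ≤ lamBar) (hYn : Yn ⊆ Y)
    (hg : ∀ z ∈ Y, |gn (x, z) - g (x, z)| ≤ δ)
    (hH : ∀ z ∈ Y, |infDist (Hn (x, z)) D - infDist (H (x, z)) D| ≤ η)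
    (hσ : 0 ≤ σn) :
    PnuVal X Y D Yn fn gn Hn σn θn lamBar τn ≤
      fn (x, y) + ((σn * η + θn * (2 * δ + lam * η + |τn - τ|) : ℝ) : EReal) := by
  obtain ⟨v, hvD, hv⟩ := exists_add_mem_norm_eq_infDist hD hDne (Hn (x, y))
  have hgxy := abs_le.1 (hg y hy)
  have hHxy' := abs_le.1 (hH y hy)
  rw [infDist_zero_of_mem hHxy] at hHxy'
  have hδ : 0 ≤ δ := (abs_nonneg _).trans (hg y hy)
  have hη : 0 ≤ η := (abs_nonneg _).trans (hH y hy)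
  set A := 2 * δ + lam * η + |τn - τ|
  have hA : 0 ≤ A := by positivity
  have hfeas : PnuFeas X Y D Yn gn Hn lamBar τn x y v (-A) lam := by
    refine ⟨hx, hy, by linarith, hlam0, hlam, hvD, fun z hz => ?_⟩
    have hgz := abs_le.1 (hg z (hYn hz))
    have hHz := abs_le.1 (hH z (hYn hz))
    have hτ : τ ≤ τn + |τn - τ| := by linarith [neg_abs_le (τn - τ)]
    have hlamH : lam * infDist (H (x, z)) D ≤ lam * (infDist (Hn (x, z)) D + η) :=
      mul_le_mul_of_nonneg_left (by linarith) hlam0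
    linarith [hpen z (hYn hz)]
  refine (PnuVal_le_PnuObj hfeas).trans (add_le_add_right (EReal.coe_le_coe_iff.2 ?_) _)
  have hσv : σn * ‖v‖ ≤ σn * η := mul_le_mul_of_nonneg_left (by linarith) hσ
  linarith

lemma PnuFeas.add_le_penalty_of_calmAtWith [ProperSpace Q] (hD : IsClosed D)
    (hDne : D.Nonempty) (hfeas : PnuFeas X Y D Yn gn Hn lamBar τn x y u α lam)
    (hYn : Yn ⊆ Y) (hYne : Yn.Nonempty) {s : ℝ} (hs : ∀ y ∈ Y, infDist y Yn ≤ s)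
    (hg : ∀ z ∈ Y, |gn (x, z) - g (x, z)| ≤ δ)
    (hH : ∀ z ∈ Y, |infDist (Hn (x, z)) D - infDist (H (x, z)) D| ≤ η)
    {κg κH : ℝ} (hκg : 0 ≤ κg) (hκH : 0 ≤ κH)
    (hgLip : ∀ y ∈ Y, ∀ y' ∈ Y, |g (x, y) - g (x, y')| ≤ κg * ‖y - y'‖)
    (hHLip : ∀ y ∈ Y, ∀ y' ∈ Y, ‖H (x, y) - H (x, y')‖ ≤ κH * ‖y - y'‖)
    {lamL : ℝ} (hcalm : CalmAtWith Y D g H x lamL) {z : Rn m} (hz : z ∈ Y) :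
    gn (x, y) + α ≤ g (x, z) + lamL * infDist (H (x, z)) D +
      ((κg + lamBar * κH) * s + δ + lamBar * η + τn) := by
  obtain ⟨-, -, -, hlam0, hlam, -, hcons⟩ := hfeas
  have hlamBar : 0 ≤ lamBar := hlam0.trans hlam
  have hK : 0 ≤ κg + lamBar * κH := by positivity
  have hnear : ∀ z' ∈ Y, H (x, z') ∈ D → ∀ w ∈ Yn,
      gn (x, y) + α ≤ (κg + lamBar * κH) * dist z' w + (g (x, z') + δ + lamBar * η + τn) := by
    intro z' hz' hHz' w hw
    have hwz' : ‖w - z'‖ = dist z' w := by rw [dist_comm, dist_eq_norm]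
    have hgw := abs_le.1 (hg w (hYn hw))
    have hgL := abs_le.1 (hgLip w (hYn hw) z' hz')
    have hHw := abs_le.1 (hH w (hYn hw))
    have hdist : infDist (H (x, w)) D ≤ κH * ‖w - z'‖ := by
      have := infDist_le_infDist_add_dist (x := H (x, w)) (y := H (x, z')) (s := D)
      rw [infDist_zero_of_mem hHz', zero_add, dist_eq_norm] at this
      exact this.trans (hHLip w (hYn hw) z' hz')
    have hpen : lam * infDist (Hn (x, w)) D ≤ lamBar * (κH * ‖w - z'‖ + η) :=
      mul_le_mul hlam (by linarith) infDist_nonneg hlamBar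
    rw [← hwz']
    linarith [hcons w hw]
  refine hcalm.le_add_mul_infDist hD hDne (fun z' hz' hHz' => ?_) hz
  have := le_mul_infDist_add hYne hK (hnear z' hz' hHz')
  linarith [mul_le_mul_of_nonneg_left (hs z' hz') hK]

end ApproximateProblem

namespace BasicAssumption

variable {X : Set (Rn n)} {Y : Set (Rn m)} {D : Set Q} {Yν : ℕ → Set (Rn m)}
  {f : Rn n × Rn m → EReal} {fν : ℕ → Rn n × Rn m → EReal}
  {g : Rn n × Rn m → ℝ} {gν : ℕ → Rn n × Rn m → ℝ}
  {H : Rn n × Rn m → Q} {Hν : ℕ → Rn n × Rn m → Q}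
  {σ θ lamBar τν δ η : ℕ → ℝ}
  (ba : BasicAssumption X Y D Yν f fν g gν H Hν σ θ lamBar τν δ η)
include ba

lemma δ_nonneg (ν : ℕ) : 0 ≤ δ ν := by
  obtain ⟨x, hx⟩ := ba.X_nonempty
  obtain ⟨y, hy⟩ := ba.Y_nonempty
  exact (abs_nonneg _).trans (ba.g_err ν x hx y hy)

lemma η_nonneg (ν : ℕ) : 0 ≤ η ν := by
  obtain ⟨x, hx⟩ := ba.X_nonempty
  obtain ⟨y, hy⟩ := ba.Y_nonempty
  exact (abs_nonneg _).trans (ba.H_err ν x hx y hy)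

theorem limsup_PnuVal_le [ProperSpace Q] {τ : ℝ}
    (hrate : Tendsto (fun ν => θ ν * |τν ν - τ|) atTop (𝓝 0))
    {x : Rn n} {y : Rn m} (hfeas : PFeas X Y D g H τ x y) (hcalm : CalmAt Y D g H x) :
    limsup (fun ν => PnuVal X Y D (Yν ν) (fν ν) (gν ν) (Hν ν)
      (σ ν) (θ ν) (lamBar ν) (τν ν)) atTop ≤ f (x, y) := by
  obtain ⟨hx, hy, hHxy, hargmin⟩ := hfeas
  obtain ⟨lam, hcalm⟩ := hcalm
  have hlam0 : 0 ≤ lam := hcalm.1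
  have hpen : ∀ z ∈ Y, g (x, y) ≤ g (x, z) + lam * infDist (H (x, z)) D + τ :=
    fun z hz => hcalm.le_add_mul_infDist ba.D_closed ba.D_nonempty hargmin hz
  set q : ℕ → ℝ := fun ν => σ ν * η ν + θ ν * (2 * δ ν + lam * η ν + |τν ν - τ|)
  have hlamη : Tendsto (fun ν => θ ν * (lam * η ν)) atTop (𝓝 0) := by
    refine squeeze_zero' (.of_forall fun ν => ?_) ?_ ba.θlamη_lim
    · have := ba.θ_nonneg ν; have := ba.η_nonneg ν; positivity
    · filter_upwards [ba.lamBar_top.eventually_ge_atTop lam] with ν hν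
      have := mul_le_mul_of_nonneg_left (mul_le_mul_of_nonneg_right hν (ba.η_nonneg ν))
        (ba.θ_nonneg ν)
      linarith
  have hq : Tendsto (fun ν => (q ν : EReal)) atTop (𝓝 0) := by
    have := ba.ση_lim.add (((ba.θδ_lim.const_mul 2).add hlamη).add hrate)
    simp only [mul_zero, add_zero] at this
    refine (continuous_coe_real_ereal.tendsto 0).comp (this.congr fun ν => ?_)
    simp only [q]; ring
  have hle : ∀ᶠ ν in atTop, PnuVal X Y D (Yν ν) (fν ν) (gν ν) (Hν ν) (σ ν) (θ ν) (lamBar ν)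
      (τν ν) ≤ fν ν (x, y) + (q ν : EReal) := by
    filter_upwards [ba.lamBar_top.eventually_ge_atTop lam] with ν hν
    exact PnuVal_le_of_penalty ba.D_closed ba.D_nonempty hx hy hHxy hpen hlam0 hν
      (ba.Yν_subset ν) (ba.g_err ν x hx) (ba.H_err ν x hx) (ba.σ_nonneg ν)
  calc _ ≤ limsup ((fun ν => fν ν (x, y)) + fun ν => (q ν : EReal)) atTop := limsup_le_limsup hle
    _ ≤ limsup (fun ν => fν ν (x, y)) atTop + limsup (fun ν => (q ν : EReal)) atTop :=
      EReal.limsup_add_le (.inr (by simp [hq.limsup_eq])) (.inr (by simp [hq.limsup_eq]))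
    _ ≤ f (x, y) := by rw [hq.limsup_eq, add_zero]; exact ba.f_limsup x hx y hy

theorem le_liminf_comp {φ : ℕ → ℕ} (hφ : StrictMono φ) {xs : ℕ → Rn n} {ys : ℕ → Rn m}
    (hxs : ∀ ν, xs ν ∈ X) (hys : ∀ ν, ys ν ∈ Y) {x : Rn n} {y : Rn m} (hx : x ∈ X)
    (hy : y ∈ Y) (hcx : Tendsto (fun k => xs (φ k)) atTop (𝓝 x))
    (hcy : Tendsto (fun k => ys (φ k)) atTop (𝓝 y)) :
    f (x, y) ≤ liminf (fun k => fν (φ k) (xs (φ k), ys (φ k))) atTop := by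
  -- `f_liminf` concerns full sequences: fill the gaps of the subsequence with the limit point
  set xs' : ℕ → Rn n := fun ν => if ν ∈ range φ then xs ν else x
  set ys' : ℕ → Rn m := fun ν => if ν ∈ range φ then ys ν else y
  have hxs' : ∀ ν, xs' ν ∈ X := fun ν => by
    simp only [xs']; split_ifs; exacts [hxs ν, hx]
  have hys' : ∀ ν, ys' ν ∈ Y := fun ν => by
    simp only [ys']; split_ifs; exacts [hys ν, hy]
  calc f (x, y) ≤ liminf (fun ν => fν ν (xs' ν, ys' ν)) atTop :=
        ba.f_liminf x hx y hy xs' ys' hxs' hys' (tendsto_ite_mem_range hφ hcx)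
          (tendsto_ite_mem_range hφ hcy)
    _ ≤ liminf (fun k => fν (φ k) (xs' (φ k), ys' (φ k))) atTop :=
        hφ.tendsto_atTop.liminf_le_liminf_comp
    _ = _ := by simp [xs', ys']


theorem tendsto_slack_zero (hσ : Tendsto σ atTop atTop) (hθ : Tendsto θ atTop atTop)
    {ε : ℕ → ℝ} (hε : Tendsto ε atTop (𝓝 0)) {φ : ℕ → ℕ} (hφ : Tendsto φ atTop atTop)
    {xs : ℕ → Rn n} {ys : ℕ → Rn m} {us : ℕ → Q} {αs lams : ℕ → ℝ}
    (hsol : ∀ k, PnuEps X Y D (Yν (φ k)) (fν (φ k)) (gν (φ k)) (Hν (φ k)) (σ (φ k)) (θ (φ k))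
      (lamBar (φ k)) (τν (φ k)) (ε (φ k)) (xs k) (ys k) (us k) (αs k) (lams k))
    (hup : limsup (fun k => PnuVal X Y D (Yν (φ k)) (fν (φ k)) (gν (φ k)) (Hν (φ k))
      (σ (φ k)) (θ (φ k)) (lamBar (φ k)) (τν (φ k))) atTop < ⊤)
    (hlow : ⊥ < liminf (fun k => fν (φ k) (xs k, ys k)) atTop) :
    Tendsto (fun k => ‖us k‖) atTop (𝓝 0) ∧ Tendsto αs atTop (𝓝 0) := by
  obtain ⟨C, hC⟩ := EReal.exists_eventually_le_of_add_le (hε.comp hφ) hup hlow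
    fun k => (hsol k).2.2
  have hσu : ∀ k, 0 ≤ σ (φ k) * ‖us k‖ := fun k => mul_nonneg (ba.σ_nonneg _) (norm_nonneg _)
  have hθα : ∀ k, 0 ≤ θ (φ k) * -αs k := fun k =>
    mul_nonneg (ba.θ_nonneg _) (neg_nonneg.2 (hsol k).1.2.2.1)
  refine ⟨tendsto_zero_of_mul_le (hσ.comp hφ) (.of_forall fun k => norm_nonneg _)
    (hC.mono fun k hk => by rw [Function.comp_apply]; linarith [hθα k]), ?_⟩
  have hα : Tendsto (fun k => -αs k) atTop (𝓝 0) :=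
    tendsto_zero_of_mul_le (hθ.comp hφ) (.of_forall fun k => neg_nonneg.2 (hsol k).1.2.2.1)
      (hC.mono fun k hk => by rw [Function.comp_apply]; linarith [hσu k])
  simpa using hα.neg

theorem tendsto_lower_error {τ : ℝ} (hθ : Tendsto θ atTop atTop)
    (hrate : Tendsto (fun ν => θ ν * |τν ν - τ|) atTop (𝓝 0))
    {s : ℕ → ℝ} (hs : ∀ ν, ∀ y ∈ Y, infDist y (Yν ν) ≤ s ν)
    (hslim : Tendsto (fun ν => θ ν * lamBar ν * s ν) atTop (𝓝 0)) (κg κH : ℝ) :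
    Tendsto (fun ν => (κg + lamBar ν * κH) * s ν + δ ν + lamBar ν * η ν + τν ν) atTop
      (𝓝 τ) := by
  have hs0 : ∀ ν, 0 ≤ s ν := fun ν =>
    infDist_nonneg.trans (hs ν _ ba.Y_nonempty.some_mem)
  have hs : Tendsto s atTop (𝓝 0) :=
    tendsto_zero_of_tendsto_atTop_mul (hθ.atTop_mul_atTop₀ ba.lamBar_top)
      (.of_forall hs0) hslim
  have hlams : Tendsto (fun ν => lamBar ν * s ν) atTop (𝓝 0) :=
    tendsto_zero_of_tendsto_atTop_mul hθ
      (.of_forall fun ν => mul_nonneg (ba.lamBar_nonneg ν) (hs0 ν))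
      (hslim.congr fun ν => by ring)
  have hlamη : Tendsto (fun ν => lamBar ν * η ν) atTop (𝓝 0) :=
    tendsto_zero_of_tendsto_atTop_mul hθ
      (.of_forall fun ν => mul_nonneg (ba.lamBar_nonneg ν) (ba.η_nonneg ν))
      (ba.θlamη_lim.congr fun ν => by ring)
  have hτ : Tendsto τν atTop (𝓝 τ) := tendsto_iff_norm_sub_tendsto_zero.2
    (tendsto_zero_of_tendsto_atTop_mul hθ (.of_forall fun ν => norm_nonneg _) hrate)
  have := ((((hs.const_mul κg).add (hlams.const_mul κH)).add ba.δ_lim).add hlamη).add hτ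
  simp only [mul_zero, add_zero, zero_add] at this
  exact this.congr fun ν => by ring

section Subsequence

variable {φ : ℕ → ℕ} (hφ : Tendsto φ atTop atTop) {xs : ℕ → Rn n} {ys : ℕ → Rn m}
  (hxs : ∀ k, xs k ∈ X) (hys : ∀ k, ys k ∈ Y) {x : Rn n} {y : Rn m} (hx : x ∈ X) (hy : y ∈ Y)
  (hcx : Tendsto xs atTop (𝓝 x)) (hcy : Tendsto ys atTop (𝓝 y))
include hφ hxs hys hx hy hcx hcy

theorem tendsto_gν_comp : Tendsto (fun k => gν (φ k) (xs k, ys k)) atTop (𝓝 (g (x, y))) := by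
  have hg := ba.g_cont.tendsto_comp_prodMk hx hy hxs hys hcx hcy
  have herr : Tendsto (fun k => gν (φ k) (xs k, ys k) - g (xs k, ys k)) atTop (𝓝 0) :=
    squeeze_zero_norm (fun k => ba.g_err (φ k) _ (hxs k) _ (hys k)) (ba.δ_lim.comp hφ)
  simpa using hg.add herr

theorem H_mem_of_tendsto {us : ℕ → Q} (hus : Tendsto (fun k => ‖us k‖) atTop (𝓝 0))
    (hD : ∀ k, Hν (φ k) (xs k, ys k) + us k ∈ D) : H (x, y) ∈ D := by
  have hH : Tendsto (fun k => infDist (H (xs k, ys k)) D) atTop (𝓝 (infDist (H (x, y)) D)) :=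
    ((continuous_infDist_pt D).tendsto _).comp
      (ba.H_cont.tendsto_comp_prodMk hx hy hxs hys hcx hcy)
  have hbound : ∀ k, infDist (H (xs k, ys k)) D ≤ ‖us k‖ + η (φ k) := fun k => by
    have h1 : infDist (Hν (φ k) (xs k, ys k)) D ≤ ‖us k‖ := by
      simpa [dist_eq_norm] using infDist_le_dist_of_mem (x := Hν (φ k) (xs k, ys k)) (hD k)
    linarith [(abs_le.1 (ba.H_err (φ k) _ (hxs k) _ (hys k))).1]
  have hle : infDist (H (x, y)) D ≤ 0 := by
    simpa using le_of_tendsto_of_tendsto' hH (hus.add (ba.η_lim.comp hφ)) hbound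
  exact (ba.D_closed.mem_iff_infDist_zero ba.D_nonempty).2 (le_antisymm hle infDist_nonneg)

theorem le_add_of_locallyCalmAt [ProperSpace Q] {τ : ℝ} {us : ℕ → Q} {αs lams : ℕ → ℝ}
    (hfeas : ∀ k, PnuFeas X Y D (Yν (φ k)) (gν (φ k)) (Hν (φ k)) (lamBar (φ k)) (τν (φ k))
      (xs k) (ys k) (us k) (αs k) (lams k))
    (hα : Tendsto αs atTop (𝓝 0)) (hloc : LocallyCalmAt Y D g H x)
    {s : ℕ → ℝ} (hs : ∀ ν, ∀ y ∈ Y, infDist y (Yν ν) ≤ s ν) {κg κH : ℝ}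
    (herr : Tendsto (fun ν => (κg + lamBar ν * κH) * s ν + δ ν + lamBar ν * η ν + τν ν)
      atTop (𝓝 τ))
    (hκg : 0 ≤ κg) (hκH : 0 ≤ κH)
    (hgLip : ∀ x ∈ X, ∀ y ∈ Y, ∀ y' ∈ Y, |g (x, y) - g (x, y')| ≤ κg * ‖y - y'‖)
    (hHLip : ∀ x ∈ X, ∀ y ∈ Y, ∀ y' ∈ Y, ‖H (x, y) - H (x, y')‖ ≤ κH * ‖y - y'‖)
    {z : Rn m} (hz : z ∈ Y) (hHz : H (x, z) ∈ D) : g (x, y) ≤ g (x, z) + τ := by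
  obtain ⟨lamL, ρ, hlamL, hρ, hlocal⟩ := hloc
  have hineq : ∀ᶠ k in atTop, gν (φ k) (xs k, ys k) + αs k ≤
      g (xs k, z) + lamL * infDist (H (xs k, z)) D +
        ((κg + lamBar (φ k) * κH) * s (φ k) + δ (φ k) + lamBar (φ k) * η (φ k) + τν (φ k)) := by
    filter_upwards [hcx.eventually (closedBall_mem_nhds x hρ)] with k hk
    exact (hfeas k).add_le_penalty_of_calmAtWith ba.D_closed ba.D_nonempty
      (ba.Yν_subset _) (ba.Yν_nonempty _) (hs _) (ba.g_err _ _ (hxs k)) (ba.H_err _ _ (hxs k))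
      hκg hκH (hgLip _ (hxs k)) (hHLip _ (hxs k)) ⟨hlamL, hlocal _ hk⟩ hz
  have hleft := (ba.tendsto_gν_comp hφ hxs hys hx hy hcx hcy).add hα
  have hgz := ba.g_cont.tendsto_comp_prodMk hx hz hxs (fun _ => hz) hcx tendsto_const_nhds
  have hHz' := ((continuous_infDist_pt D).tendsto _).comp
    (ba.H_cont.tendsto_comp_prodMk hx hz hxs (fun _ => hz) hcx tendsto_const_nhds)
  have hlim := le_of_tendsto_of_tendsto hleft
    ((hgz.add (hHz'.const_mul lamL)).add (herr.comp hφ)) hineq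
  simpa [infDist_zero_of_mem hHz] using hlim

end Subsequence

end BasicAssumption

theorem Pnu_cluster_optimal_of_localCalm_sub_general
    [NormedSpace ℝ Q] [FiniteDimensional ℝ Q]
    (X : Set (Rn n)) (Y : Set (Rn m)) (D : Set Q) (Yν : ℕ → Set (Rn m))
    (f : Rn n × Rn m → EReal) (fν : ℕ → Rn n × Rn m → EReal)
    (g : Rn n × Rn m → ℝ) (gν : ℕ → Rn n × Rn m → ℝ)
    (H : Rn n × Rn m → Q) (Hν : ℕ → Rn n × Rn m → Q)
    (σ θ lamBar τν δ η : ℕ → ℝ) (τ : ℝ)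
    (ba : BasicAssumption X Y D Yν f fν g gν H Hν σ θ lamBar τν δ η)
    (hσ : Tendsto σ atTop atTop) (hθ : Tendsto θ atTop atTop)
    (ε : ℕ → ℝ) (hεlim : Tendsto ε atTop (𝓝 0))
    (hrate : Tendsto (fun ν => θ ν * |τν ν - τ|) atTop (𝓝 0))
    (xstar : Rn n) (ystar : Rn m)
    (hopt : POpt X Y D f g H τ xstar ystar)
    (hcalm : CalmAt Y D g H xstar)
    (xs : ℕ → Rn n) (ys : ℕ → Rn m) (us : ℕ → Q) (αs lams : ℕ → ℝ)
    (hsol : ∀ ν, PnuEps X Y D (Yν ν) (fν ν) (gν ν) (Hν ν)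
      (σ ν) (θ ν) (lamBar ν) (τν ν) (ε ν) (xs ν) (ys ν) (us ν) (αs ν) (lams ν))
    (φ : ℕ → ℕ) (hφ : StrictMono φ)
    (hatx : Rn n) (haty : Rn m)
    (hcx : Tendsto (fun k => xs (φ k)) atTop (𝓝 hatx))
    (hcy : Tendsto (fun k => ys (φ k)) atTop (𝓝 haty))
    (hloc : LocallyCalmAt Y D g H hatx)
    -- θ^ν λ̄^ν sup_{y ∈ Y} dist₂(y, Y^ν) → 0
    (s : ℕ → ℝ) (hs : ∀ ν, ∀ y ∈ Y, infDist y (Yν ν) ≤ s ν)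
    (hslim : Tendsto (fun ν => θ ν * lamBar ν * s ν) atTop (𝓝 0))
    -- Lipschitz constants
    (κg κH : ℝ) (hκg : 0 ≤ κg) (hκH : 0 ≤ κH)
    (hgLip : ∀ x ∈ X, ∀ y ∈ Y, ∀ y' ∈ Y, |g (x, y) - g (x, y')| ≤ κg * ‖y - y'‖)
    (hHLip : ∀ x ∈ X, ∀ y ∈ Y, ∀ y' ∈ Y, ‖H (x, y) - H (x, y')‖ ≤ κH * ‖y - y'‖) :
    POpt X Y D f g H τ hatx haty ∧
    ∃ r : ℝ, PVal X Y D f g H τ = (r : EReal) ∧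
      Tendsto (fun k =>
        PnuVal X Y D (Yν (φ k)) (fν (φ k)) (gν (φ k)) (Hν (φ k))
          (σ (φ k)) (θ (φ k)) (lamBar (φ k)) (τν (φ k))) atTop
        (𝓝 ((r : EReal))) := by
  obtain ⟨hfeasStar, hfinStar, hvalStar⟩ := hopt
  set r := (f (xstar, ystar)).toReal
  have hr : f (xstar, ystar) = r := (EReal.coe_toReal hfinStar (ba.f_ne_bot _)).symm
  have hφ' := hφ.tendsto_atTop
  have hxs k : xs (φ k) ∈ X := (hsol (φ k)).1.1
  have hys k : ys (φ k) ∈ Y := (hsol (φ k)).1.2.1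
  have hx : hatx ∈ X := ba.X_closed.mem_of_tendsto hcx (.of_forall hxs)
  have hy : haty ∈ Y := ba.Y_closed.mem_of_tendsto hcy (.of_forall hys)
  have hup : limsup (fun k => PnuVal X Y D (Yν (φ k)) (fν (φ k)) (gν (φ k)) (Hν (φ k))
      (σ (φ k)) (θ (φ k)) (lamBar (φ k)) (τν (φ k))) atTop ≤ r :=
    hφ'.limsup_comp_le_limsup.trans ((ba.limsup_PnuVal_le hrate hfeasStar hcalm).trans hr.le)
  have hlow := ba.le_liminf_comp hφ (fun ν => (hsol ν).1.1) (fun ν => (hsol ν).1.2.1) hx hy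
    hcx hcy
  obtain ⟨hus, hαs⟩ := ba.tendsto_slack_zero hσ hθ hεlim hφ' (fun k => hsol (φ k))
    (hup.trans_lt (EReal.coe_lt_top r)) ((ba.f_ne_bot _).bot_lt.trans_le hlow)
  have hHD : H (hatx, haty) ∈ D := ba.H_mem_of_tendsto hφ' hxs hys hx hy hcx hcy hus
    fun k => (hsol (φ k)).1.2.2.2.2.2.1
  have hargmin : ∀ z ∈ Y, H (hatx, z) ∈ D → g (hatx, haty) ≤ g (hatx, z) + τ :=
    fun z hz hHz => ba.le_add_of_locallyCalmAt hφ' hxs hys hx hy hcx hcy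
      (fun k => (hsol (φ k)).1) hαs hloc hs (ba.tendsto_lower_error hθ hrate hs hslim κg κH)
      hκg hκH hgLip hHLip hz hHz
  have hfeas : PFeas X Y D g H τ hatx haty := ⟨hx, hy, hHD, hargmin⟩
  have hbound k : fν (φ k) (xs (φ k), ys (φ k)) ≤ PnuVal X Y D (Yν (φ k)) (fν (φ k))
      (gν (φ k)) (Hν (φ k)) (σ (φ k)) (θ (φ k)) (lamBar (φ k)) (τν (φ k)) + (ε (φ k) : EReal) :=
    (le_PnuObj (ba.σ_nonneg _) (ba.θ_nonneg _) (hsol (φ k)).1.2.2.1).trans (hsol (φ k)).2.2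
  obtain ⟨hlim, hfr⟩ := EReal.tendsto_of_le_add (hεlim.comp hφ') hbound hlow hup
    (hr ▸ hvalStar ▸ PVal_le hfeas)
  exact ⟨⟨hfeas, hfr ▸ EReal.coe_ne_top r, hfr.trans (hr.symm.trans hvalStar)⟩, r,
    hvalStar.symm.trans hr, hlim⟩

/-- Theorem 2.8(b): optimality under local calmness with `Y^ν ⊂ Y`, Lipschitz
conditions, and sufficiently fast convergence `θ^ν λ̄^ν sup_{y∈Y} dist₂(y,Y^ν) → 0`. -/
theorem Pnu_cluster_optimal_of_localCalm_sub
    [NormedSpace ℝ Q] [FiniteDimensional ℝ Q]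
    (X : Set (Rn n)) (Y : Set (Rn m)) (D : Set Q) (Yν : ℕ → Set (Rn m))
    (f : Rn n × Rn m → EReal) (fν : ℕ → Rn n × Rn m → EReal)
    (g : Rn n × Rn m → ℝ) (gν : ℕ → Rn n × Rn m → ℝ)
    (H : Rn n × Rn m → Q) (Hν : ℕ → Rn n × Rn m → Q)
    (σ θ lamBar τν δ η : ℕ → ℝ) (τ : ℝ) (hτ : 0 ≤ τ)
    (ba : BasicAssumption X Y D Yν f fν g gν H Hν σ θ lamBar τν δ η)
    (hσ : Tendsto σ atTop atTop) (hθ : Tendsto θ atTop atTop)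
    (ε : ℕ → ℝ) (hε0 : ∀ ν, 0 ≤ ε ν) (hεlim : Tendsto ε atTop (𝓝 0))
    (hrate : Tendsto (fun ν => θ ν * |τν ν - τ|) atTop (𝓝 0))
    (xstar : Rn n) (ystar : Rn m)
    (hopt : POpt X Y D f g H τ xstar ystar)
    (hcalm : CalmAt Y D g H xstar)
    (xs : ℕ → Rn n) (ys : ℕ → Rn m) (us : ℕ → Q) (αs lams : ℕ → ℝ)
    (hsol : ∀ ν, PnuEps X Y D (Yν ν) (fν ν) (gν ν) (Hν ν)
      (σ ν) (θ ν) (lamBar ν) (τν ν) (ε ν) (xs ν) (ys ν) (us ν) (αs ν) (lams ν))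
    (φ : ℕ → ℕ) (hφ : StrictMono φ)
    (hatx : Rn n) (haty : Rn m) (hatu : Q) (hatα : ℝ)
    (hcx : Tendsto (fun k => xs (φ k)) atTop (𝓝 hatx))
    (hcy : Tendsto (fun k => ys (φ k)) atTop (𝓝 haty))
    (hcu : Tendsto (fun k => us (φ k)) atTop (𝓝 hatu))
    (hcα : Tendsto (fun k => αs (φ k)) atTop (𝓝 hatα))
    (hloc : LocallyCalmAt Y D g H hatx)
    -- θ^ν λ̄^ν sup_{y ∈ Y} dist₂(y, Y^ν) → 0
    (s : ℕ → ℝ) (hs : ∀ ν, ∀ y ∈ Y, infDist y (Yν ν) ≤ s ν)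
    (hslim : Tendsto (fun ν => θ ν * lamBar ν * s ν) atTop (𝓝 0))
    -- Lipschitz constants
    (κg κH : ℝ) (hκg : 0 ≤ κg) (hκH : 0 ≤ κH)
    (hgLip : ∀ x ∈ X, ∀ y ∈ Y, ∀ y' ∈ Y, |g (x, y) - g (x, y')| ≤ κg * ‖y - y'‖)
    (hHLip : ∀ x ∈ X, ∀ y ∈ Y, ∀ y' ∈ Y, ‖H (x, y) - H (x, y')‖ ≤ κH * ‖y - y'‖) :
    POpt X Y D f g H τ hatx haty ∧
    ∃ r : ℝ, PVal X Y D f g H τ = (r : EReal) ∧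
      Tendsto (fun k =>
        PnuVal X Y D (Yν (φ k)) (fν (φ k)) (gν (φ k)) (Hν (φ k))
          (σ (φ k)) (θ (φ k)) (lamBar (φ k)) (τν (φ k))) atTop
        (𝓝 ((r : EReal))) :=
  Pnu_cluster_optimal_of_localCalm_sub_general X Y D Yν f fν g gν H Hν σ θ lamBar τν δ η τ ba hσ hθ
    ε hεlim hrate xstar ystar hopt hcalm xs ys us αs lams hsol φ hφ hatx haty hcx hcy hloc s hs
    hslim κg κH hκg hκH hgLip hHLip
end
end

section
/- Let D ⊂ ℝ^q be nonempty and x ∈ ℝ^n. The value function V is calm at x with penalty threshold λ if and only if inf_{y∈Y} [ g(x,y) + λ·dist(H(x,y), D) ] = inf_{y∈Y} { g(x,y) | H(x,y) ∈ D }. -/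
open Filter Topology Metric Set

attribute [local instance] Classical.propDecidable

noncomputable section

variable {n m : ℕ} {Q : Type*} [NormedAddCommGroup Q]

/-! The perturbations `u` that make `y ∈ Y` feasible for `V(x,u)` are the `a - H(x,y)` with
`a ∈ D`, and their norms have infimum `dist(H(x,y), D)`. So calmness, `V(x,0) ≤ g(x,y) + λ‖u‖`
for all such `u`, amounts to `V(x,0) ≤ g(x,y) + λ dist(H(x,y), D)` for all `y ∈ Y`, i.e.
`V(x,0) ≤ μ(x,λ)`; the reverse inequality holds because the penalty vanishes on feasible points. -/

theorem Metric.exists_mem_comp_dist_lt {α : Type*} [PseudoMetricSpace α] {s : Set α}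
    (hs : s.Nonempty) {x : α} {f : ℝ → ℝ} {t : ℝ} (hf : Monotone f)
    (hfc : ContinuousAt f (infDist x s)) (h : f (infDist x s) < t) :
    ∃ y ∈ s, f (dist x y) < t := by
  have hlt : ∀ᶠ d in 𝓝[>] infDist x s, f d < t :=
    nhdsWithin_le_nhds (hfc.eventually (gt_mem_nhds h))
  obtain ⟨d, hfd, hd⟩ := (hlt.and self_mem_nhdsWithin).exists
  obtain ⟨y, hy, hxy⟩ := (infDist_lt_iff hs).1 hd
  exact ⟨y, hy, (hf hxy.le).trans_lt hfd⟩

section ValueFunction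

variable {Y : Set (Rn m)} {D : Set Q} {g : Rn n × Rn m → ℝ} {H : Rn n × Rn m → Q}
  {x : Rn n} {lam : ℝ}

theorem Vfun_le_of_mem {u : Q} {y : Rn m} (hy : y ∈ Y) (hu : H (x, y) + u ∈ D) :
    Vfun Y D g H x u ≤ g (x, y) :=
  iInf₂_le y ⟨hy, hu⟩

theorem muSet_le_of_mem {y : Rn m} (hy : y ∈ Y) :
    muSet Y D g H x lam ≤ ((g (x, y) + lam * infDist (H (x, y)) D : ℝ) : EReal) :=
  iInf₂_le y hy

theorem muSet_le_Vfun_zero : muSet Y D g H x lam ≤ Vfun Y D g H x 0 :=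
  le_iInf₂ fun y ⟨hy, hyD⟩ => (muSet_le_of_mem hy).trans_eq <| by
    rw [infDist_zero_of_mem (by simpa using hyD), mul_zero, add_zero]

theorem CalmAtWith.Vfun_zero_le {u : Q} {y : Rn m} (hcalm : CalmAtWith Y D g H x lam)
    (hy : y ∈ Y) (hu : H (x, y) + u ∈ D) :
    Vfun Y D g H x 0 ≤ ((g (x, y) + lam * ‖u‖ : ℝ) : EReal) := by
  have hcalm_u := hcalm.2 u
  rw [EReal.sub_le_iff_le_add (.inl (EReal.coe_ne_bot _)) (.inl (EReal.coe_ne_top _))] at hcalm_u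
  exact hcalm_u.trans (by rw [EReal.coe_add]; gcongr; exact Vfun_le_of_mem hy hu)

theorem CalmAtWith.Vfun_zero_le_muSet (hD : D.Nonempty) (hcalm : CalmAtWith Y D g H x lam) :
    Vfun Y D g H x 0 ≤ muSet Y D g H x lam := by
  refine le_iInf₂ fun y hy => EReal.le_of_forall_lt_iff_le.1 fun s hs => ?_
  obtain ⟨a, ha, has⟩ := Metric.exists_mem_comp_dist_lt hD
    (f := fun d => g (x, y) + lam * d) ((monotone_id.const_mul hcalm.1).const_add _)
    (by fun_prop) (by exact_mod_cast hs)
  calc Vfun Y D g H x 0 ≤ ((g (x, y) + lam * ‖a - H (x, y)‖ : ℝ) : EReal) :=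
        hcalm.Vfun_zero_le hy (by simpa using ha)
    _ ≤ s := by rw [← dist_eq_norm']; exact_mod_cast has.le

theorem calmAtWith_of_Vfun_zero_le_muSet (hlam : 0 ≤ lam)
    (h : Vfun Y D g H x 0 ≤ muSet Y D g H x lam) : CalmAtWith Y D g H x lam := by
  refine ⟨hlam, fun u => le_iInf₂ fun y ⟨hy, hu⟩ => EReal.sub_le_of_le_add ?_⟩
  have hdist : infDist (H (x, y)) D ≤ ‖u‖ := by
    simpa [dist_eq_norm] using infDist_le_dist_of_mem (x := H (x, y)) hu
  calc Vfun Y D g H x 0 ≤ ((g (x, y) + lam * infDist (H (x, y)) D : ℝ) : EReal) :=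
        h.trans (muSet_le_of_mem hy)
    _ ≤ ((g (x, y) + lam * ‖u‖ : ℝ) : EReal) := by gcongr
    _ = (g (x, y) : EReal) + ((lam * ‖u‖ : ℝ) : EReal) := EReal.coe_add _ _

end ValueFunction

theorem calm_iff_exact_penalty_general
    (Y : Set (Rn m)) (D : Set Q)
    (g : Rn n × Rn m → ℝ) (H : Rn n × Rn m → Q)
    (hD : D.Nonempty) (x : Rn n) (lam : ℝ) (hlam : 0 ≤ lam) :
    CalmAtWith Y D g H x lam ↔ muSet Y D g H x lam = Vfun Y D g H x 0 :=
  ⟨fun hcalm => muSet_le_Vfun_zero.antisymm (hcalm.Vfun_zero_le_muSet hD),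
    fun h => calmAtWith_of_Vfun_zero_le_muSet hlam h.ge⟩

/-- Proposition 2.4: characterization of calmness at a point. For nonempty `D`,
the value function `V` is calm at `x` with penalty threshold `lam` if and only if
`inf_{y∈Y} [g(x,y) + lam·dist(H(x,y), D)] = inf_{y∈Y} { g(x,y) | H(x,y) ∈ D }`. -/
theorem calm_iff_exact_penalty
    [NormedSpace ℝ Q] [FiniteDimensional ℝ Q]
    (Y : Set (Rn m)) (D : Set Q)
    (g : Rn n × Rn m → ℝ) (H : Rn n × Rn m → Q)
    (hD : D.Nonempty) (x : Rn n) (lam : ℝ) (hlam : 0 ≤ lam) :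
    CalmAtWith Y D g H x lam ↔ muSet Y D g H x lam = Vfun Y D g H x 0 :=
  calm_iff_exact_penalty_general Y D g H hD x lam hlam
end
end
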